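/- Let π_{2m}(γ) = γ^{2m} and π_{2m+1}(γ) = γ^{2m+1} − 2m γ^{2m−1}, and define D̂S_{2M}(z,z') = Σ_{m=0}^{M−1} [π_{2m}(z)π_{2m+1}(z') − π_{2m+1}(z)π_{2m}(z')]/(2m)!. Then D̂S_{2M}(z,z') = (z'−z)·e_M(zz'), where e_M(γ) = Σ_{m=0}^{2M−2} γ^m/m! is the degree 2M−2 Taylor polynomial of the exponential. -/
import Mathlib


open BigOperators

/-- With the skew-orthogonal polynomials `π_{2m}(γ) = γ^{2m}`,
`π_{2m+1}(γ) = γ^{2m+1} − 2m γ^{2m−1}`, the sum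
`D̂S_{2M}(z,z') = Σ_{m=0}^{M−1} (π_{2m}(z)π_{2m+1}(z') − π_{2m+1}(z)π_{2m}(z'))/(2m)!`
equals `(z'−z)·e_M(zz')`, where `e_M` is the exponential Taylor polynomial of
degree `2M−2`. -/
theorem DShat_closed_form (M : ℕ) (hM : 1 ≤ M) (z z' : ℂ) :
    ∑ m ∈ Finset.range M,
        (z ^ (2 * m) * (z' ^ (2 * m + 1) - (2 * m : ℂ) * z' ^ (2 * m - 1))
          - (z ^ (2 * m + 1) - (2 * m : ℂ) * z ^ (2 * m - 1)) * z' ^ (2 * m))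
          / ((2 * m).factorial : ℂ)
      = (z' - z) * ∑ m ∈ Finset.range (2 * M - 1), (z * z') ^ m / (m.factorial : ℂ) := by
  induction M, hM using Nat.le_induction with
  | base => norm_num
  | succ M hM ih =>
    obtain ⟨n, rfl⟩ : ∃ n, M = n + 1 := ⟨M - 1, (Nat.succ_pred_eq_of_pos hM).symm⟩
    have h1 : 2 * (n + 1 + 1) - 1 = (2 * (n + 1) - 1) + 1 + 1 := by omega
    have h2 : 2 * (n + 1) - 1 = 2 * n + 1 := by omega
    rw [Finset.sum_range_succ, ih, h1, Finset.sum_range_succ, Finset.sum_range_succ, h2]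
    have e1 : 2 * (n + 1) = 2 * n + 2 := by ring
    have e2 : 2 * (n + 1) + 1 = 2 * n + 3 := by ring
    rw [e1]
    have hf : ((2 * n + 2).factorial : ℂ)
        = ((2 * n + 2 : ℕ) : ℂ) * ((2 * n + 1).factorial : ℂ) := by
      rw [show 2 * n + 2 = (2 * n + 1) + 1 from rfl, Nat.factorial_succ]
      push_cast; ring
    have h1ne : ((2 * n + 1).factorial : ℂ) ≠ 0 :=
      Nat.cast_ne_zero.mpr (Nat.factorial_ne_zero _)
    have h2ne : ((2 * n + 2 : ℕ) : ℂ) ≠ 0 := Nat.cast_ne_zero.mpr (by omega)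
    rw [show 2 * n + 1 + 1 = 2 * n + 2 from rfl, hf]
    push_cast at hf h2ne ⊢
    field_simp
    ring
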